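/- arXiv:1801.05318 — 2 statements merged into one kernel-verified Lean document; each statement's English description precedes it below -/
import Mathlib

section
/- Let r ≥ 3 and s ≥ 1, and let T be obtained from a path on s+1 vertices by attaching r pendant leaves to one endpoint and two pendant leaves to each of the other s vertices. Then pc(T) = r − 1 + s and F_t(T) = r + 2s. -/
/-- The forcing process: vertices that eventually get colored starting from `S`.
A colored vertex with exactly one uncolored neighbor forces that neighbor. -/
inductive SimpleGraph.Forced {V : Type*} (G : SimpleGraph V) (S : Set V) : V → Prop
  | init (v : V) (hv : v ∈ S) : SimpleGraph.Forced G S v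
  | force (u w : V) (hu : SimpleGraph.Forced G S u) (hadj : G.Adj u w)
      (huniq : ∀ x, G.Adj u x → x ≠ w → SimpleGraph.Forced G S x) :
      SimpleGraph.Forced G S w

/-- `S` is a zero forcing set if the forcing process colors every vertex. -/
def SimpleGraph.IsZeroForcingSet {V : Type*} (G : SimpleGraph V) (S : Set V) : Prop :=
  ∀ v, G.Forced S v

/-- The zero forcing number `Z(G)`. -/
noncomputable def SimpleGraph.zeroForcingNumber {V : Type*} (G : SimpleGraph V) : ℕ :=
  sInf {n | ∃ S : Set V, G.IsZeroForcingSet S ∧ S.ncard = n}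

/-- A total forcing set: a zero forcing set inducing a subgraph without isolated vertices. -/
def SimpleGraph.IsTotalForcingSet {V : Type*} (G : SimpleGraph V) (S : Set V) : Prop :=
  G.IsZeroForcingSet S ∧ ∀ v ∈ S, ∃ u ∈ S, G.Adj v u

/-- The total forcing number `F_t(G)`. -/
noncomputable def SimpleGraph.totalForcingNumber {V : Type*} (G : SimpleGraph V) : ℕ :=
  sInf {n | ∃ S : Set V, G.IsTotalForcingSet S ∧ S.ncard = n}

/-- A set of vertices that is the vertex set of a path (as a subgraph) of `G`. -/
def SimpleGraph.IsPathSet {V : Type*} (G : SimpleGraph V) (P : Set V) : Prop :=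
  ∃ (u v : V) (w : G.Walk u v), w.IsPath ∧ {x | x ∈ w.support} = P

/-- A path cover: a collection of vertex-disjoint paths partitioning the vertex set. -/
def SimpleGraph.IsPathCover {V : Type*} (G : SimpleGraph V) (P : Set (Set V)) : Prop :=
  (∀ Q ∈ P, G.IsPathSet Q) ∧ P.PairwiseDisjoint id ∧ ⋃₀ P = Set.univ

/-- The path cover number `pc(G)`. -/
noncomputable def SimpleGraph.pathCoverNumber {V : Type*} (G : SimpleGraph V) : ℕ :=
  sInf {n | ∃ P : Set (Set V), G.IsPathCover P ∧ P.ncard = n}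

/-- The matching number `α'(G)`. -/
noncomputable def SimpleGraph.matchingNumber {V : Type*} (G : SimpleGraph V) : ℕ :=
  sSup {n | ∃ M : G.Subgraph, M.IsMatching ∧ M.edgeSet.ncard = n}

/-- A leaf is a vertex with exactly one neighbor. -/
def SimpleGraph.IsLeaf {V : Type*} (G : SimpleGraph V) (v : V) : Prop :=
  (G.neighborSet v).ncard = 1

/-- The tree obtained from `T'` by attaching `m a` pendant leaves to each vertex `a ∈ A`. -/
def attachLeaves {V : Type*} (T : SimpleGraph V) (A : Finset V) (m : V → ℕ) :
    SimpleGraph (V ⊕ (Σ a : {x : V // x ∈ A}, Fin (m a.1))) :=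
  SimpleGraph.fromRel (fun x y =>
    match x, y with
    | Sum.inl a, Sum.inl b => T.Adj a b
    | Sum.inl a, Sum.inr p => p.1.1 = a
    | _, _ => False)


/-!
Every spine vertex `a` carries `m a ≥ 2` pendant leaves, and these leaves are twins (they have
the same neighbourhood). Two twins cannot both be left out of a zero forcing set: the vertex
forcing the first one would still see the second one uncoloured. A total forcing set containing
a leaf also contains the leaf's support, so a total forcing set contains the whole spine and
misses at most one leaf per spine vertex, whence `F_t ≥ ∑ m`; dropping one leaf per spine vertex
attains this. On the path cover side, only the endpoints of a path can be leaves, and a path with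
two leaves also passes through a non-leaf, so every path cover has at least
`#leaves - #spine = ∑ m - |V|` paths; the paths `ℓ - a - ℓ'` through each spine vertex together
with the remaining leaves as singletons attain this. None of this uses the edges of the base
graph; for the path on `s + 1` vertices, `∑ m = r + 2s`.
-/

open Finset

namespace Set

variable {α : Type*} [Finite α] {P : Set (Set α)}

theorem ncard_eq_sum_ncard_inter (hdisj : P.PairwiseDisjoint id) (hcover : ⋃₀ P = univ)
    (L : Set α) : L.ncard = ∑ Q ∈ P.toFinite.toFinset, (L ∩ Q).ncard := by
  have hL : L = ⋃ Q ∈ P, L ∩ Q := by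
    rw [← inter_iUnion₂, ← sUnion_eq_biUnion, hcover, inter_univ]
  conv_lhs => rw [hL]
  rw [P.toFinite.ncard_biUnion (s := fun Q => L ∩ Q) (fun _ _ => toFinite _)
      (hdisj.mono fun _ => inter_subset_right),
    finsum_mem_eq_finite_toFinset_sum]

theorem ncard_le_ncard_add_ncard_compl_of_partition (hdisj : P.PairwiseDisjoint id)
    (hcover : ⋃₀ P = univ) {L : Set α} (h : ∀ Q ∈ P, (L ∩ Q).ncard ≤ 1 + (Lᶜ ∩ Q).ncard) :
    L.ncard ≤ P.ncard + Lᶜ.ncard := by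
  rw [ncard_eq_sum_ncard_inter hdisj hcover L, ncard_eq_sum_ncard_inter hdisj hcover Lᶜ,
    ncard_eq_toFinset_card P, card_eq_sum_ones, ← sum_add_distrib]
  exact sum_le_sum fun Q hQ => h Q (P.toFinite.mem_toFinset.1 hQ)

theorem ncard_eq_ncard_add_ncard_compl_of_partition (hdisj : P.PairwiseDisjoint id)
    (hcover : ⋃₀ P = univ) {L : Set α} (h : ∀ Q ∈ P, (L ∩ Q).ncard = 1 + (Lᶜ ∩ Q).ncard) :
    L.ncard = P.ncard + Lᶜ.ncard := by
  rw [ncard_eq_sum_ncard_inter hdisj hcover L, ncard_eq_sum_ncard_inter hdisj hcover Lᶜ,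
    ncard_eq_toFinset_card P, card_eq_sum_ones, ← sum_add_distrib]
  exact sum_congr rfl fun Q hQ => h Q (P.toFinite.mem_toFinset.1 hQ)

end Set

namespace SimpleGraph

variable {V : Type*} {G : SimpleGraph V}

theorem Forced.mem_or_mem_of_neighborSet_eq {S : Set V} {x y : V} (hx : G.Forced S x)
    (hxy : x ≠ y) (hN : G.neighborSet x = G.neighborSet y) : x ∈ S ∨ y ∈ S := by
  induction hx generalizing y with
  | init x hx => exact .inl hx
  | force u x _ hux _ _ ih =>
    have huy : G.Adj u y := (show u ∈ G.neighborSet y from hN ▸ hux.symm).symm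
    exact (ih y huy hxy.symm hxy.symm hN.symm).symm

theorem Walk.IsPath.eq_or_eq_of_subsingleton_neighborSet {u v x : V} {w : G.Walk u v}
    (hw : w.IsPath) (hx : x ∈ w.support) (hN : (G.neighborSet x).Subsingleton) :
    x = u ∨ x = v := by
  obtain ⟨i, rfl, hi⟩ := Walk.mem_support_iff_exists_getVert.1 hx
  by_contra! hne
  have hi0 : i ≠ 0 := fun h => hne.1 (h ▸ w.getVert_zero)
  have hil : i < w.length := lt_of_le_of_ne hi fun h => hne.2 (h ▸ w.getVert_length)
  obtain ⟨y, z, hyz, hyz'⟩ :=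
    Set.ncard_eq_two.1 (hw.ncard_neighborSet_toSubgraph_internal_eq_two hi0 hil)
  have hsub := hyz' ▸ w.toSubgraph.neighborSet_subset (w.getVert i)
  exact hyz (hN (hsub (by simp)) (hsub (by simp)))

theorem IsPathSet.ncard_inter_le_one_add {L Q : Set V}
    (hL : ∀ x ∈ L, (G.neighborSet x).Subsingleton) (hLind : G.IsIndepSet L)
    (hQ : G.IsPathSet Q) : (L ∩ Q).ncard ≤ 1 + (Lᶜ ∩ Q).ncard := by
  obtain ⟨u, v, w, hw, rfl⟩ := hQ
  have hends : L ∩ {x | x ∈ w.support} ⊆ {u, v} := fun x ⟨hxL, hx⟩ =>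
    hw.eq_or_eq_of_subsingleton_neighborSet hx (hL x hxL)
  have hpair := (Set.ncard_le_ncard hends).trans (Set.ncard_insert_le u {v})
  rw [Set.ncard_singleton] at hpair
  by_cases hu : u ∈ L ∧ ¬ w.Nil
  · obtain ⟨hu, hnil⟩ := hu
    have hsnd : w.snd ∈ Lᶜ ∩ {x | x ∈ w.support} :=
      ⟨fun hsndL => hLind hu hsndL (w.adj_snd hnil).ne (w.adj_snd hnil),
        w.getVert_mem_support 1⟩
    have := (Set.ncard_pos (w.support.finite_toSet.inter_of_right _)).2 ⟨_, hsnd⟩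
    omega
  · have hv : L ∩ {x | x ∈ w.support} ⊆ {v} := fun x hx => by
      rcases hends hx with rfl | rfl
      · exact (not_and_not_right.1 hu hx.1).eq
      · rfl
    exact (Set.ncard_le_ncard hv).trans (by simp)

theorem IsPathCover.ncard_le_ncard_add_ncard_compl [Finite V] {L : Set V}
    (hL : ∀ x ∈ L, (G.neighborSet x).Subsingleton) (hLind : G.IsIndepSet L)
    {P : Set (Set V)} (hP : G.IsPathCover P) : L.ncard ≤ P.ncard + Lᶜ.ncard :=
  Set.ncard_le_ncard_add_ncard_compl_of_partition hP.2.1 hP.2.2 fun Q hQ =>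
    (hP.1 Q hQ).ncard_inter_le_one_add hL hLind

theorem isPathSet_singleton (v : V) : G.IsPathSet {v} :=
  ⟨v, v, .nil, .nil, by ext; simp⟩

theorem isPathSet_of_adj_of_adj {u x v : V} (hux : G.Adj u x) (hxv : G.Adj x v) (huv : u ≠ v) :
    G.IsPathSet {u, x, v} :=
  ⟨u, v, .cons hux (.cons hxv .nil), by simp [Walk.isPath_def, hux.ne, hxv.ne, huv],
    by ext; simp⟩

theorem pairwiseDisjoint_range_fiber {α : Type*} (f : V → α) :
    (Set.range fun x => f ⁻¹' {f x}).PairwiseDisjoint id := by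
  rintro _ ⟨x, rfl⟩ _ ⟨y, rfl⟩ hne
  refine Set.disjoint_left.2 fun z hzx hzy => hne ?_
  change f z = f x at hzx
  change f z = f y at hzy
  change f ⁻¹' {f x} = f ⁻¹' {f y}
  rw [← hzx, ← hzy]

theorem isPathCover_range_fiber {α : Type*} (f : V → α)
    (hf : ∀ x, G.IsPathSet (f ⁻¹' {f x})) : G.IsPathCover (Set.range fun x => f ⁻¹' {f x}) :=
  ⟨Set.forall_mem_range.2 hf, pairwiseDisjoint_range_fiber f,
    Set.sUnion_eq_univ_iff.2 fun x => ⟨_, ⟨x, rfl⟩, rfl⟩⟩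

end SimpleGraph

section attachLeaves

variable {V : Type*} {T : SimpleGraph V} {A : Finset V} {m : V → ℕ}

theorem attachLeaves_adj_inl_inr {a : V} {p : Σ a : {x // x ∈ A}, Fin (m a.1)} :
    (attachLeaves T A m).Adj (.inl a) (.inr p) ↔ p.1.1 = a := by
  simp [attachLeaves]

theorem attachLeaves_neighborSet_inr (p : Σ a : {x // x ∈ A}, Fin (m a.1)) :
    (attachLeaves T A m).neighborSet (.inr p) = {.inl p.1.1} := by
  ext (a | q)
  · simp [attachLeaves, eq_comm]
  · simp [attachLeaves]

theorem attachLeaves_isIndepSet_range_inr :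
    (attachLeaves T A m).IsIndepSet (Set.range Sum.inr) := by
  rintro _ ⟨p, rfl⟩ _ ⟨q, rfl⟩ _
  simp [attachLeaves]

variable {S : Set (V ⊕ Σ a : {x // x ∈ A}, Fin (m a.1))}

theorem SimpleGraph.IsZeroForcingSet.attachLeaves_inr_mem_or_inr_mem
    (hS : (attachLeaves T A m).IsZeroForcingSet S) {p q : Σ a : {x // x ∈ A}, Fin (m a.1)}
    (hpq : p ≠ q) (h : p.1 = q.1) : .inr p ∈ S ∨ .inr q ∈ S :=
  (hS _).mem_or_mem_of_neighborSet_eq (by simpa using hpq)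
    (by rw [attachLeaves_neighborSet_inr, attachLeaves_neighborSet_inr, h])

theorem SimpleGraph.IsTotalForcingSet.attachLeaves_inl_mem
    (hS : (attachLeaves T A m).IsTotalForcingSet S) {p : Σ a : {x // x ∈ A}, Fin (m a.1)}
    (hp : .inr p ∈ S) : .inl p.1.1 ∈ S := by
  obtain ⟨u, hu, hadj⟩ := hS.2 _ hp
  rw [← SimpleGraph.mem_neighborSet, attachLeaves_neighborSet_inr] at hadj
  rwa [← Set.mem_singleton_iff.1 hadj]

end attachLeaves

section attachLeavesUniv

open SimpleGraph

variable {V : Type*} [Fintype V] {T : SimpleGraph V} {m : V → ℕ}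

theorem Nat.card_sigma_mem_univ_fin :
    Nat.card (Σ a : {x // x ∈ (univ : Finset V)}, Fin (m a.1)) = ∑ a, m a := by
  simp

theorem SimpleGraph.IsTotalForcingSet.sum_le_ncard_attachLeaves (hm : ∀ a, 2 ≤ m a)
    {S : Set (V ⊕ Σ a : {x // x ∈ (univ : Finset V)}, Fin (m a.1))}
    (hS : (attachLeaves T univ m).IsTotalForcingSet S) : ∑ a, m a ≤ S.ncard := by
  have hinl (a : V) : .inl a ∈ S :=
    (hS.1.attachLeaves_inr_mem_or_inr_mem
      (p := ⟨⟨a, mem_univ a⟩, ⟨0, by linarith [hm a]⟩⟩)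
      (q := ⟨⟨a, mem_univ a⟩, ⟨1, by linarith [hm a]⟩⟩) (by simp) rfl).elim
      hS.attachLeaves_inl_mem hS.attachLeaves_inl_mem
  have hcompl : Sᶜ.ncard ≤ Nat.card V := by
    rw [← Set.ncard_univ]
    refine Set.ncard_le_ncard_of_injOn (Sum.elim id fun p => p.1.1) (fun _ _ => trivial) ?_
    rintro (a | p) hp (b | q) hq hpq
    · exact absurd (hinl a) hp
    · exact absurd (hinl a) hp
    · exact absurd (hinl b) hq
    · by_contra hne
      exact (hS.1.attachLeaves_inr_mem_or_inr_mem (fun h => hne (congrArg Sum.inr h))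
        (Subtype.ext hpq)).elim hp hq
  have := Set.ncard_add_ncard_compl S
  rw [Nat.card_sum, Nat.card_sigma_mem_univ_fin] at this
  omega

theorem exists_isTotalForcingSet_attachLeaves (hm : ∀ a, 2 ≤ m a) :
    ∃ S, (attachLeaves T univ m).IsTotalForcingSet S ∧ S.ncard = ∑ a, m a := by
  let firstLeaf (a : V) : V ⊕ Σ a : {x // x ∈ (univ : Finset V)}, Fin (m a.1) :=
    .inr ⟨⟨a, mem_univ a⟩, ⟨0, by linarith [hm a]⟩⟩
  have hinl (a : V) : .inl a ∉ Set.range firstLeaf := by simp [firstLeaf]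
  have hinr (q : Σ a : {x // x ∈ (univ : Finset V)}, Fin (m a.1)) :
      .inr q ∈ Set.range firstLeaf ↔ q.2.val = 0 := by
    obtain ⟨⟨a, ha⟩, i, hi⟩ := q
    constructor
    · rintro ⟨b, hb⟩
      simp only [firstLeaf, Sum.inr.injEq, Sigma.mk.inj_iff, Subtype.mk.injEq] at hb
      obtain ⟨rfl, hb⟩ := hb
      exact (Fin.val_eq_of_eq (eq_of_heq hb)).symm
    · rintro (rfl : i = 0)
      exact ⟨a, rfl⟩
  refine ⟨(Set.range firstLeaf)ᶜ, ⟨fun x => ?_, ?_⟩, ?_⟩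
  · by_cases hx : x ∈ (Set.range firstLeaf)ᶜ
    · exact .init x hx
    obtain ⟨a, rfl⟩ := Set.notMem_compl_iff.1 hx
    refine .force (.inl a) _ (.init _ (hinl a)) (by simp [firstLeaf, attachLeaves_adj_inl_inr]) ?_
    rintro (b | q) hadj hne
    · exact .init _ (hinl b)
    · refine .init _ fun hq => hne ?_
      obtain ⟨⟨b, hb⟩, i, hi⟩ := q
      obtain rfl : b = a := attachLeaves_adj_inl_inr.1 hadj
      obtain rfl : i = 0 := (hinr _).1 hq
      rfl
  · rintro (a | p) _
    · exact ⟨.inr ⟨⟨a, mem_univ a⟩, ⟨1, by linarith [hm a]⟩⟩, by simp [hinr],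
        attachLeaves_adj_inl_inr.2 rfl⟩
    · exact ⟨.inl p.1.1, hinl _, (attachLeaves_adj_inl_inr.2 rfl).symm⟩
  · have hF : (Set.range firstLeaf).ncard = Nat.card V :=
      Set.ncard_range_of_injective fun a b h => by simp_all [firstLeaf]
    have := Set.ncard_add_ncard_compl (Set.range firstLeaf)
    rw [Nat.card_sum, Nat.card_sigma_mem_univ_fin, hF] at this
    omega

theorem totalForcingNumber_attachLeaves (hm : ∀ a, 2 ≤ m a) :
    (attachLeaves T univ m).totalForcingNumber = ∑ a, m a := by
  obtain ⟨S, hS, hcard⟩ := exists_isTotalForcingSet_attachLeaves hm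
  refine IsLeast.csInf_eq ⟨⟨S, hS, hcard⟩, ?_⟩
  rintro _ ⟨S', hS', rfl⟩
  exact hS'.sum_le_ncard_attachLeaves hm

theorem SimpleGraph.IsPathCover.sum_le_ncard_add_card_attachLeaves
    {P : Set (Set (V ⊕ Σ a : {x // x ∈ (univ : Finset V)}, Fin (m a.1)))}
    (hP : (attachLeaves T univ m).IsPathCover P) : ∑ a, m a ≤ P.ncard + Nat.card V := by
  have := hP.ncard_le_ncard_add_ncard_compl (Set.forall_mem_range.2 fun p => by
    rw [attachLeaves_neighborSet_inr]; exact Set.subsingleton_singleton)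
    attachLeaves_isIndepSet_range_inr
  rwa [Set.compl_range_inr, Set.ncard_range_of_injective Sum.inr_injective,
    Set.ncard_range_of_injective Sum.inl_injective, Nat.card_sigma_mem_univ_fin] at this

/-- The fibres of this map are the paths `ℓ₀ - a - ℓ₁` through each spine vertex `a` and its
first two leaves, and the singletons of the remaining leaves. -/
def attachLeaves.pathCoverKey (m : V → ℕ) :
    V ⊕ (Σ a : {x // x ∈ (univ : Finset V)}, Fin (m a.1)) →
      V ⊕ (Σ a : {x // x ∈ (univ : Finset V)}, Fin (m a.1)) :=
  Sum.elim .inl fun p => if p.2.val < 2 then .inl p.1.1 else .inr p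

open attachLeaves

theorem attachLeaves.preimage_pathCoverKey_inl (hm : ∀ a, 2 ≤ m a) (a : V) :
    pathCoverKey m ⁻¹' {.inl a} = {.inr ⟨⟨a, mem_univ a⟩, ⟨0, by linarith [hm a]⟩⟩, .inl a,
      .inr ⟨⟨a, mem_univ a⟩, ⟨1, by linarith [hm a]⟩⟩} := by
  ext (b | ⟨⟨b, hb⟩, i, hi⟩)
  · simp [pathCoverKey]
  · simp only [pathCoverKey, Set.mem_preimage, Sum.elim_inr, Set.mem_singleton_iff,
      Set.mem_insert_iff]
    rcases eq_or_ne b a with rfl | hba <;> split_ifs <;> simp_all [Fin.ext_iff] <;> omega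

theorem attachLeaves.preimage_pathCoverKey_inr
    {p : Σ a : {x // x ∈ (univ : Finset V)}, Fin (m a.1)} (hp : 2 ≤ p.2.val) :
    pathCoverKey m ⁻¹' {.inr p} = {.inr p} := by
  ext (b | q)
  · simp [pathCoverKey]
  · simp only [pathCoverKey, Set.mem_preimage, Sum.elim_inr, Set.mem_singleton_iff]
    split_ifs with hq
    · simp only [Sum.inr.injEq, false_iff]
      rintro rfl
      omega
    · rfl

theorem attachLeaves.isPathSet_preimage_pathCoverKey_and_ncard (hm : ∀ a, 2 ≤ m a)
    (x : V ⊕ Σ a : {x // x ∈ (univ : Finset V)}, Fin (m a.1)) :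
    (attachLeaves T univ m).IsPathSet (pathCoverKey m ⁻¹' {pathCoverKey m x}) ∧
      (Set.range Sum.inr ∩ pathCoverKey m ⁻¹' {pathCoverKey m x}).ncard =
        1 + ((Set.range Sum.inr)ᶜ ∩ pathCoverKey m ⁻¹' {pathCoverKey m x}).ncard := by
  have hspine (a : V) : (attachLeaves T univ m).IsPathSet (pathCoverKey m ⁻¹' {.inl a}) ∧
      (Set.range Sum.inr ∩ pathCoverKey m ⁻¹' {.inl a}).ncard =
        1 + ((Set.range Sum.inr)ᶜ ∩ pathCoverKey m ⁻¹' {.inl a}).ncard := by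
    rw [preimage_pathCoverKey_inl hm]
    refine ⟨isPathSet_of_adj_of_adj (attachLeaves_adj_inl_inr.2 rfl).symm
      (attachLeaves_adj_inl_inr.2 rfl) (by simp), ?_⟩
    rw [Set.compl_range_inr, Set.inter_insert_of_mem (Set.mem_range_self _),
      Set.inter_insert_of_notMem (by simp), Set.inter_singleton_of_mem (Set.mem_range_self _),
      Set.inter_insert_of_notMem (by simp), Set.inter_insert_of_mem (Set.mem_range_self _),
      Set.inter_singleton_eq_empty.2 (by simp), Set.ncard_pair (by simp)]
    simp
  obtain a | p := x
  · exact hspine a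
  · by_cases hp : p.2.val < 2
    · rw [show pathCoverKey m (.inr p) = .inl p.1.1 from if_pos hp]
      exact hspine p.1.1
    · rw [show pathCoverKey m (.inr p) = .inr p from if_neg hp,
        preimage_pathCoverKey_inr (not_lt.1 hp)]
      refine ⟨isPathSet_singleton _, ?_⟩
      rw [Set.inter_singleton_of_mem (Set.mem_range_self p),
        Set.inter_singleton_eq_empty.2 (Set.notMem_compl_iff.2 (Set.mem_range_self p))]
      simp

theorem exists_isPathCover_attachLeaves (hm : ∀ a, 2 ≤ m a) :
    ∃ P, (attachLeaves T univ m).IsPathCover P ∧ P.ncard + Nat.card V = ∑ a, m a := by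
  have hP := isPathCover_range_fiber (G := attachLeaves T univ m) (pathCoverKey m)
    fun x => (isPathSet_preimage_pathCoverKey_and_ncard hm x).1
  refine ⟨_, hP, ?_⟩
  have := Set.ncard_eq_ncard_add_ncard_compl_of_partition hP.2.1 hP.2.2
    (Set.forall_mem_range.2 fun x => (isPathSet_preimage_pathCoverKey_and_ncard (T := T) hm x).2)
  rwa [Set.compl_range_inr, Set.ncard_range_of_injective Sum.inr_injective,
    Set.ncard_range_of_injective Sum.inl_injective, Nat.card_sigma_mem_univ_fin, eq_comm] at this

theorem pathCoverNumber_attachLeaves (hm : ∀ a, 2 ≤ m a) :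
    (attachLeaves T univ m).pathCoverNumber = ∑ a, m a - Nat.card V := by
  obtain ⟨P, hP, hcard⟩ := exists_isPathCover_attachLeaves hm
  refine IsLeast.csInf_eq ⟨⟨P, hP, by omega⟩, ?_⟩
  rintro _ ⟨Q, hQ, rfl⟩
  have := hQ.sum_le_ncard_add_card_attachLeaves
  omega

end attachLeavesUniv

theorem stmt18_general (r s : ℕ) (hr : 3 ≤ r) :
    (attachLeaves (SimpleGraph.pathGraph (s + 1)) Finset.univ
        (fun i => if i = 0 then r else 2)).pathCoverNumber = r - 1 + s ∧
    (attachLeaves (SimpleGraph.pathGraph (s + 1)) Finset.univ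
        (fun i => if i = 0 then r else 2)).totalForcingNumber = r + 2 * s := by
  have hm (i : Fin (s + 1)) : 2 ≤ if i = 0 then r else 2 := by split_ifs <;> omega
  have hsum : ∑ i : Fin (s + 1), (if i = 0 then r else 2) = r + 2 * s := by
    simp [Fin.sum_univ_succ, Fin.succ_ne_zero, mul_comm]
  rw [pathCoverNumber_attachLeaves hm, totalForcingNumber_attachLeaves hm, hsum, Nat.card_fin]
  omega

theorem stmt18 (r s : ℕ) (hr : 3 ≤ r) (hs : 1 ≤ s) :
    (attachLeaves (SimpleGraph.pathGraph (s + 1)) Finset.univ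
        (fun i => if i = 0 then r else 2)).pathCoverNumber = r - 1 + s ∧
    (attachLeaves (SimpleGraph.pathGraph (s + 1)) Finset.univ
        (fun i => if i = 0 then r else 2)).totalForcingNumber = r + 2 * s :=
  stmt18_general r s hr
end

section
/- For the double star S(r,s) with r, s ≥ 2, the path cover number equals r + s − 2 and the total forcing number equals r + s. -/
namespace DStarAux

open SimpleGraph

variable {V : Type*} {G : SimpleGraph V}

lemma nbr_unique {w x y : V} (h : G.IsLeaf w) (h1 : G.Adj w x) (h2 : G.Adj w y) : x = y := by
  obtain ⟨a, ha⟩ := Set.ncard_eq_one.mp h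
  have hx : x ∈ G.neighborSet w := h1
  have hy : y ∈ G.neighborSet w := h2
  rw [ha, Set.mem_singleton_iff] at hx hy
  rw [hx, hy]

lemma internal_two_nbrs {a b x : V} (p : G.Walk a b) (hp : p.IsPath) (hx : x ∈ p.support)
    (hxa : x ≠ a) (hxb : x ≠ b) : ∃ y z : V, y ≠ z ∧ G.Adj x y ∧ G.Adj x z := by
  induction p with
  | nil => simp at hx; exact absurd hx hxa
  | @cons a c b h q ih =>
    rw [SimpleGraph.Walk.support_cons, List.mem_cons] at hx
    rcases hx with rfl | hxq
    · exact absurd rfl hxa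
    by_cases hxc : x = c
    · subst hxc
      cases q with
      | nil => exact absurd rfl hxb
      | @cons _ d _ h' q' =>
        refine ⟨a, d, ?_, h.symm, h'⟩
        rintro rfl
        exact ((SimpleGraph.Walk.cons_isPath_iff _ _).mp hp).2 (by simp)
    · exact ih ((SimpleGraph.Walk.cons_isPath_iff _ _).mp hp).1 hxq hxc hxb

lemma adj_center {u v : V} (hT : G.IsTree)
    (hothers : ∀ w, w ≠ u → w ≠ v → G.IsLeaf w)
    {w z : V} (hw : w ≠ u) (hw' : w ≠ v) (hz : G.Adj w z) : z = u ∨ z = v := by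
  by_contra hc
  push_neg at hc
  obtain ⟨hzu, hzv⟩ := hc
  have hwl := hothers w hw hw'
  have hzl := hothers z hzu hzv
  classical
  obtain ⟨p, hp⟩ : ∃ p : G.Walk w u, p.IsPath :=
    ⟨(((hT.isConnected.preconnected w u).some.toPath : G.Path w u)).1,
      (((hT.isConnected.preconnected w u).some.toPath : G.Path w u)).2⟩
  cases p with
  | nil => exact hw rfl
  | @cons _ c _ h q =>
    have hcz : c = z := nbr_unique hwl h hz
    subst hcz
    cases q with
    | nil => exact hzu rfl
    | @cons _ d _ h' q' =>
      have hdw : d = w := nbr_unique hzl h' hz.symm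
      have hni := ((SimpleGraph.Walk.cons_isPath_iff _ _).mp hp).2
      exact hni (by
        rw [SimpleGraph.Walk.support_cons]
        exact List.mem_cons_of_mem _ (hdw ▸ (SimpleGraph.Walk.start_mem_support _)))

lemma sUnion_small [Finite V] {P : Set (Set V)} (h1 : ∀ Q ∈ P, Q.ncard ≤ 1) :
    (⋃₀ P).ncard ≤ P.ncard := by
  classical
  refine Set.ncard_le_ncard_of_injOn (fun x => if h : ∃ Q ∈ P, x ∈ Q then h.choose else ∅) ?_ ?_ (Set.toFinite _)
  · intro x hx
    rw [Set.mem_sUnion] at hx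
    rw [dif_pos hx]; exact hx.choose_spec.1
  · intro x hx y hy hxy
    rw [Set.mem_sUnion] at hx hy
    dsimp only at hxy
    rw [dif_pos hx, dif_pos hy] at hxy
    have h1x := hx.choose_spec
    have h1y := hy.choose_spec
    have hle := h1 _ h1x.1
    have hxQ := h1x.2
    have hyQ : y ∈ hx.choose := by rw [hxy]; exact h1y.2
    rcases (Set.ncard_le_one_iff_eq (Set.toFinite _)).mp hle with he | ⟨a, ha⟩
    · rw [he] at hxQ; simp at hxQ
    · rw [ha, Set.mem_singleton_iff] at hxQ hyQ; rw [hxQ, hyQ]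

lemma forced_ne_pair {S : Set V} {c l1 l2 : V} (h1 : G.Adj c l1) (h2 : G.Adj c l2)
    (hl1 : G.IsLeaf l1) (hl2 : G.IsLeaf l2) (hne : l1 ≠ l2)
    (hn1 : l1 ∉ S) (hn2 : l2 ∉ S) : ∀ x, G.Forced S x → x ≠ l1 ∧ x ≠ l2 := by
  intro x hx
  induction hx with
  | init v hv => constructor <;> rintro rfl <;> contradiction
  | force a w ha hadj huniq ih_a ih =>
      constructor
      · rintro rfl
        have hac : a = c := nbr_unique hl1 hadj.symm h1.symm
        subst hac
        exact (ih l2 h2 hne.symm).2 rfl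
      · rintro rfl
        have hac : a = c := nbr_unique hl2 hadj.symm h2.symm
        subst hac
        exact (ih l1 h1 hne).1 rfl


lemma walk_nil_of {u v a b : V} (p : G.Walk a b)
    (hedge : ∀ x y : V, G.Adj x y → x = u ∨ x = v ∨ y = u ∨ y = v)
    (hu : u ∉ p.support) (hv : v ∉ p.support) : {x | x ∈ p.support} = {a} := by
  cases p with
  | nil => ext x; simp
  | @cons _ c _ h q =>
    exfalso
    have ha : a ∈ (SimpleGraph.Walk.cons h q).support := by simp
    have hc : c ∈ (SimpleGraph.Walk.cons h q).support := by
      rw [SimpleGraph.Walk.support_cons]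
      exact List.mem_cons_of_mem _ (SimpleGraph.Walk.start_mem_support q)
    rcases hedge a c h with h1|h1|h1|h1
    · exact hu (h1 ▸ ha)
    · exact hv (h1 ▸ ha)
    · exact hu (h1 ▸ hc)
    · exact hv (h1 ▸ hc)

lemma support_sub {u v a b : V} (hothers : ∀ x, x ≠ u → x ≠ v → G.IsLeaf x)
    (p : G.Walk a b) (hp : p.IsPath) : {x | x ∈ p.support} ⊆ {a, b, u, v} := by
  intro x hx
  simp only [Set.mem_setOf_eq] at hx
  simp only [Set.mem_insert_iff, Set.mem_singleton_iff]
  by_cases hxa : x = a; · tauto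
  by_cases hxb : x = b; · tauto
  by_cases hxu : x = u; · tauto
  by_cases hxv : x = v; · tauto
  obtain ⟨y, z, hyz, hy, hz⟩ := internal_two_nbrs p hp hx hxa hxb
  exact absurd (nbr_unique (hothers x hxu hxv) hy hz) hyz

lemma ncard_triple_le (a b c : V) : ({a, b, c} : Set V).ncard ≤ 3 := by
  refine le_trans (Set.ncard_insert_le _ _) ?_
  have : ({b, c} : Set V).ncard ≤ 2 := by
    refine le_trans (Set.ncard_insert_le _ _) ?_
    simp
  omega

lemma ncard_quad_le (a b c d : V) : ({a, b, c, d} : Set V).ncard ≤ 4 := by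
  refine le_trans (Set.ncard_insert_le _ _) ?_
  have := ncard_triple_le (V := V) b c d
  omega


end DStarAux

set_option maxHeartbeats 2000000 in
theorem stmt19 {V : Type*} [Fintype V] (G : SimpleGraph V) (r s : ℕ)
    (hr : 2 ≤ r) (hs : 2 ≤ s) (hT : G.IsTree) (u v : V)
    (huv : G.Adj u v) (hu : ¬ G.IsLeaf u) (hv : ¬ G.IsLeaf v)
    (hothers : ∀ w, w ≠ u → w ≠ v → G.IsLeaf w)
    (hru : {w | G.Adj u w ∧ G.IsLeaf w}.ncard = r)
    (hsv : {w | G.Adj v w ∧ G.IsLeaf w}.ncard = s) :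
    G.pathCoverNumber = r + s - 2 ∧ G.totalForcingNumber = r + s := by
  classical
  set Lu := {w | G.Adj u w ∧ G.IsLeaf w} with hLudef
  set Lv := {w | G.Adj v w ∧ G.IsLeaf w} with hLvdef
  have hneuv : u ≠ v := huv.ne
  have hedge : ∀ x y : V, G.Adj x y → x = u ∨ x = v ∨ y = u ∨ y = v := by
    intro x y hxy
    by_cases hx1 : x = u; · tauto
    by_cases hx2 : x = v; · tauto
    rcases DStarAux.adj_center hT hothers hx1 hx2 hxy with h | h <;> tauto
  have hLu_ne : ∀ w ∈ Lu, w ≠ u ∧ w ≠ v := by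
    intro w hw
    exact ⟨fun h => hu (h ▸ hw.2), fun h => hv (h ▸ hw.2)⟩
  have hLv_ne : ∀ w ∈ Lv, w ≠ u ∧ w ≠ v := by
    intro w hw
    exact ⟨fun h => hu (h ▸ hw.2), fun h => hv (h ▸ hw.2)⟩
  have hdisjL : ∀ w, w ∈ Lu → w ∈ Lv → False := by
    intro w h1 h2
    exact hneuv (DStarAux.nbr_unique h1.2 h1.1.symm h2.1.symm)
  have hpart : ∀ w : V, w = u ∨ w = v ∨ w ∈ Lu ∨ w ∈ Lv := by
    intro w
    by_cases h1 : w = u; · tauto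
    by_cases h2 : w = v; · tauto
    have hwl := hothers w h1 h2
    obtain ⟨z, hz⟩ : ∃ z, G.Adj w z := by
      obtain ⟨a, ha⟩ := Set.ncard_eq_one.mp hwl
      exact ⟨a, by
        have : a ∈ G.neighborSet w := by rw [ha]; rfl
        exact this⟩
    rcases DStarAux.adj_center hT hothers h1 h2 hz with rfl | rfl
    · exact Or.inr (Or.inr (Or.inl ⟨hz.symm, hwl⟩))
    · exact Or.inr (Or.inr (Or.inr ⟨hz.symm, hwl⟩))
  have huLu : u ∉ Lu := fun h => (hLu_ne u h).1 rfl
  have huLv : u ∉ Lv := fun h => (hLv_ne u h).1 rfl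
  have hvLu : v ∉ Lu := fun h => (hLu_ne v h).2 rfl
  have hvLv : v ∉ Lv := fun h => (hLv_ne v h).2 rfl
  have hdisjLuLv : Disjoint Lu Lv := Set.disjoint_left.mpr (fun w h1 h2 => hdisjL w h1 h2)
  have hunivcard : (Set.univ : Set V).ncard = r + s + 2 := by
    have huniv : (Set.univ : Set V) = insert u (insert v (Lu ∪ Lv)) := by
      ext w
      simp only [Set.mem_univ, true_iff, Set.mem_insert_iff, Set.mem_union]
      rcases hpart w with h | h | h | h <;> tauto
    rw [huniv, Set.ncard_insert_of_notMem (by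
        simp only [Set.mem_insert_iff, Set.mem_union]
        push_neg
        exact ⟨hneuv, huLu, huLv⟩) (Set.toFinite _),
      Set.ncard_insert_of_notMem (by
        simp only [Set.mem_union]
        push_neg
        exact ⟨hvLu, hvLv⟩) (Set.toFinite _),
      Set.ncard_union_eq hdisjLuLv (Set.toFinite _) (Set.toFinite _), hru, hsv]
  -- two distinct elements in Lu and in Lv
  obtain ⟨a1, ha1, a2, ha2, ha12⟩ : ∃ a ∈ Lu, ∃ b ∈ Lu, a ≠ b := by
    have h2 : 1 < Lu.ncard := by omega
    have := Set.one_lt_ncard_iff (hs := Set.toFinite Lu) |>.mp h2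
    tauto
  obtain ⟨b1, hb1, b2, hb2, hb12⟩ : ∃ a ∈ Lv, ∃ b ∈ Lv, a ≠ b := by
    have h2 : 1 < Lv.ncard := by omega
    have := Set.one_lt_ncard_iff (hs := Set.toFinite Lv) |>.mp h2
    tauto
  -- collected inequalities
  have hab : ∀ x ∈ Lu, ∀ y ∈ Lv, x ≠ y := fun x hx y hy h => hdisjL x hx (h ▸ hy)
  set T1 : Set V := {a1, u, a2} with hT1def
  set T2 : Set V := {b1, v, b2} with hT2def
  set M : Set V := (Lu \ {a1, a2}) ∪ (Lv \ {b1, b2}) with hMdef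
  have hMprop : ∀ x ∈ M, x ∈ Lu ∪ Lv ∧ x ≠ a1 ∧ x ≠ a2 ∧ x ≠ b1 ∧ x ≠ b2 := by
    intro x hx
    rcases hx with ⟨hx1, hx2⟩ | ⟨hx1, hx2⟩
    · simp only [Set.mem_insert_iff, Set.mem_singleton_iff] at hx2
      push_neg at hx2
      exact ⟨Or.inl hx1, hx2.1, hx2.2, hab x hx1 b1 hb1, hab x hx1 b2 hb2⟩
    · simp only [Set.mem_insert_iff, Set.mem_singleton_iff] at hx2
      push_neg at hx2
      exact ⟨Or.inr hx1, fun h => hdisjL x (h ▸ ha1) hx1, fun h => hdisjL x (h ▸ ha2) hx1,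
        hx2.1, hx2.2⟩
  set P0 : Set (Set V) := insert T1 (insert T2 ((fun x => ({x} : Set V)) '' M)) with hP0def
  have hP0cases : ∀ Q ∈ P0, Q = T1 ∨ Q = T2 ∨ ∃ x ∈ M, Q = {x} := by
    intro Q hQ
    rcases hQ with rfl | rfl | ⟨x, hx, rfl⟩
    · tauto
    · tauto
    · exact Or.inr (Or.inr ⟨x, hx, rfl⟩)
  have hpathT1 : G.IsPathSet T1 := by
    have hadj1 : G.Adj a1 u := ha1.1.symm
    have hadj2 : G.Adj u a2 := ha2.1
    refine ⟨a1, a2, SimpleGraph.Walk.cons hadj1 (SimpleGraph.Walk.cons hadj2 SimpleGraph.Walk.nil), ?_, ?_⟩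
    · rw [SimpleGraph.Walk.isPath_def]
      simp [hadj1.ne, hadj2.ne, ha12]
    · ext x
      simp only [SimpleGraph.Walk.support_cons, SimpleGraph.Walk.support_nil, Set.mem_setOf_eq,
        List.mem_cons, List.mem_singleton, List.not_mem_nil, or_false, hT1def,
        Set.mem_insert_iff, Set.mem_singleton_iff]
  have hpathT2 : G.IsPathSet T2 := by
    have hadj1 : G.Adj b1 v := hb1.1.symm
    have hadj2 : G.Adj v b2 := hb2.1
    refine ⟨b1, b2, SimpleGraph.Walk.cons hadj1 (SimpleGraph.Walk.cons hadj2 SimpleGraph.Walk.nil), ?_, ?_⟩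
    · rw [SimpleGraph.Walk.isPath_def]
      simp [hadj1.ne, hadj2.ne, hb12]
    · ext x
      simp only [SimpleGraph.Walk.support_cons, SimpleGraph.Walk.support_nil, Set.mem_setOf_eq,
        List.mem_cons, List.mem_singleton, List.not_mem_nil, or_false, hT2def,
        Set.mem_insert_iff, Set.mem_singleton_iff]
  have hT1T2 : Disjoint T1 T2 := by
    rw [Set.disjoint_left]
    intro t ht ht'
    simp only [hT1def, Set.mem_insert_iff, Set.mem_singleton_iff] at ht
    simp only [hT2def, Set.mem_insert_iff, Set.mem_singleton_iff] at ht'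
    rcases ht with h1 | h1 | h1 <;> rcases ht' with h2 | h2 | h2
    · exact hab a1 ha1 b1 hb1 (by rw [← h1]; exact h2)
    · exact (hLu_ne a1 ha1).2 (by rw [← h1]; exact h2)
    · exact hab a1 ha1 b2 hb2 (by rw [← h1]; exact h2)
    · exact (hLv_ne b1 hb1).1 (by rw [← h2]; exact h1)
    · exact hneuv (by rw [← h1]; exact h2)
    · exact (hLv_ne b2 hb2).1 (by rw [← h2]; exact h1)
    · exact hab a2 ha2 b1 hb1 (by rw [← h1]; exact h2)
    · exact (hLu_ne a2 ha2).2 (by rw [← h1]; exact h2)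
    · exact hab a2 ha2 b2 hb2 (by rw [← h1]; exact h2)
  have hT1M : ∀ x ∈ M, Disjoint T1 ({x} : Set V) := by
    intro x hx
    obtain ⟨hx1, hx2, hx3, _, _⟩ := hMprop x hx
    rw [Set.disjoint_right]
    intro t ht ht'
    rw [Set.mem_singleton_iff] at ht
    subst ht
    rcases ht' with rfl | rfl | rfl
    · exact hx2 rfl
    · rcases hx1 with h | h
      · exact huLu h
      · exact huLv h
    · exact hx3 rfl
  have hT2M : ∀ x ∈ M, Disjoint T2 ({x} : Set V) := by
    intro x hx
    obtain ⟨hx1, _, _, hx4, hx5⟩ := hMprop x hx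
    rw [Set.disjoint_right]
    intro t ht ht'
    rw [Set.mem_singleton_iff] at ht
    subst ht
    rcases ht' with rfl | rfl | rfl
    · exact hx4 rfl
    · rcases hx1 with h | h
      · exact hvLu h
      · exact hvLv h
    · exact hx5 rfl
  have hcoverP0 : G.IsPathCover P0 := by
    refine ⟨?_, ?_, ?_⟩
    · intro Q hQ
      rcases hP0cases Q hQ with rfl | rfl | ⟨x, hx, rfl⟩
      · exact hpathT1
      · exact hpathT2
      · exact ⟨x, x, SimpleGraph.Walk.nil, SimpleGraph.Walk.IsPath.nil, by ext y; simp⟩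
    · intro Q1 h1 Q2 h2 hne12
      rcases hP0cases Q1 h1 with rfl | rfl | ⟨x, hx, rfl⟩ <;>
        rcases hP0cases Q2 h2 with rfl | rfl | ⟨y, hy, rfl⟩
      · exact absurd rfl hne12
      · exact hT1T2
      · exact hT1M y hy
      · exact hT1T2.symm
      · exact absurd rfl hne12
      · exact hT2M y hy
      · exact (hT1M x hx).symm
      · exact (hT2M x hx).symm
      · have hxy : x ≠ y := fun h => hne12 (by rw [h])
        exact Set.disjoint_singleton_left.mpr (by simp [hxy])
    · ext x
      simp only [Set.mem_sUnion, Set.mem_univ, iff_true]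
      rcases hpart x with rfl | rfl | hx | hx
      · exact ⟨T1, by simp [hP0def], by simp [hT1def]⟩
      · exact ⟨T2, by simp [hP0def], by simp [hT2def]⟩
      · by_cases h1 : x = a1
        · exact ⟨T1, by simp [hP0def], by simp [hT1def, h1]⟩
        by_cases h2 : x = a2
        · exact ⟨T1, by simp [hP0def], by simp [hT1def, h2]⟩
        · refine ⟨{x}, ?_, rfl⟩
          refine Or.inr (Or.inr ⟨x, Or.inl ⟨hx, ?_⟩, rfl⟩)
          simp [h1, h2]
      · by_cases h1 : x = b1
        · exact ⟨T2, by simp [hP0def], by simp [hT2def, h1]⟩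
        by_cases h2 : x = b2
        · exact ⟨T2, by simp [hP0def], by simp [hT2def, h2]⟩
        · refine ⟨{x}, ?_, rfl⟩
          refine Or.inr (Or.inr ⟨x, Or.inr ⟨hx, ?_⟩, rfl⟩)
          simp [h1, h2]
  have hMcard : M.ncard = (r - 2) + (s - 2) := by
    have h1 : (Lu \ {a1, a2}).ncard = r - 2 := by
      rw [Set.ncard_diff (by
          intro t ht
          rcases ht with rfl | ht
          · exact ha1
          · rw [Set.mem_singleton_iff] at ht; exact ht ▸ ha2) (Set.toFinite _),
        Set.ncard_pair ha12, hru]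
    have h2 : (Lv \ {b1, b2}).ncard = s - 2 := by
      rw [Set.ncard_diff (by
          intro t ht
          rcases ht with rfl | ht
          · exact hb1
          · rw [Set.mem_singleton_iff] at ht; exact ht ▸ hb2) (Set.toFinite _),
        Set.ncard_pair hb12, hsv]
    rw [hMdef, Set.ncard_union_eq (by
        rw [Set.disjoint_left]
        intro t ht ht'
        exact hdisjL t ht.1 ht'.1) (Set.toFinite _) (Set.toFinite _), h1, h2]
  have hP0card : P0.ncard = r + s - 2 := by
    have himcard : ((fun x => ({x} : Set V)) '' M).ncard = M.ncard :=
      Set.ncard_image_of_injective _ (fun x y h => by simpa using h)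
    have hT2nim : T2 ∉ ((fun x => ({x} : Set V)) '' M) := by
      rintro ⟨x, hx, hT2x⟩
      have hvT2 : v ∈ (fun x => ({x} : Set V)) x := by rw [hT2x]; simp [hT2def]
      simp only [Set.mem_singleton_iff] at hvT2
      subst hvT2
      rcases (hMprop v hx).1 with h | h
      · exact hvLu h
      · exact hvLv h
    have hT1nmem : T1 ∉ insert T2 ((fun x => ({x} : Set V)) '' M) := by
      rintro (h | ⟨x, hx, hT1x⟩)
      · have huT2 : u ∈ T2 := h ▸ (by simp [hT1def] : u ∈ T1)
        simp only [hT2def, Set.mem_insert_iff, Set.mem_singleton_iff] at huT2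
        rcases huT2 with h' | h' | h'
        · exact (hLv_ne b1 hb1).1 h'.symm
        · exact hneuv h'
        · exact (hLv_ne b2 hb2).1 h'.symm
      · have huT1 : u ∈ (fun x => ({x} : Set V)) x := by rw [hT1x]; simp [hT1def]
        simp only [Set.mem_singleton_iff] at huT1
        subst huT1
        rcases (hMprop u hx).1 with h | h
        · exact huLu h
        · exact huLv h
    rw [hP0def, Set.ncard_insert_of_notMem hT1nmem (Set.toFinite _),
      Set.ncard_insert_of_notMem hT2nim (Set.toFinite _), himcard, hMcard]
    omega
  -- lower bound for path covers
  have hpc_lower : ∀ P : Set (Set V), G.IsPathCover P → r + s + 2 ≤ P.ncard + 4 := by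
    intro P hP
    obtain ⟨hpaths, hdisjP, hUn⟩ := hP
    obtain ⟨Qu, hQu, huQu⟩ : ∃ Q ∈ P, u ∈ Q := by
      have : u ∈ ⋃₀ P := by rw [hUn]; trivial
      simpa using this
    obtain ⟨Qv, hQv, hvQv⟩ : ∃ Q ∈ P, v ∈ Q := by
      have : v ∈ ⋃₀ P := by rw [hUn]; trivial
      simpa using this
    have honlyu : ∀ Q ∈ P, u ∈ Q → Q = Qu := by
      intro Q hQ huQ
      by_contra hne'
      exact (Set.disjoint_left.mp (hdisjP hQ hQu hne')) huQ huQu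
    have honlyv : ∀ Q ∈ P, v ∈ Q → Q = Qv := by
      intro Q hQ hvQ
      by_contra hne'
      exact (Set.disjoint_left.mp (hdisjP hQ hQv hne')) hvQ hvQv
    have hQsmall : ∀ Q ∈ P, u ∉ Q → v ∉ Q → Q.ncard ≤ 1 := by
      intro Q hQ h1 h2
      obtain ⟨a, b, p, hp, hsup⟩ := hpaths Q hQ
      rw [← hsup] at h1 h2 ⊢
      rw [DStarAux.walk_nil_of p hedge (by simpa using h1) (by simpa using h2)]
      simp
    have hQ3u : ∀ Q ∈ P, v ∉ Q → Q.ncard ≤ 3 := by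
      intro Q hQ h2
      obtain ⟨a, b, p, hp, hsup⟩ := hpaths Q hQ
      have hsub := DStarAux.support_sub (u := u) (v := v) hothers p hp
      rw [← hsup] at h2 ⊢
      have hsub' : {x | x ∈ p.support} ⊆ {a, b, u} := by
        intro x hx
        rcases hsub hx with h | h | h | h
        · exact Or.inl h
        · exact Or.inr (Or.inl h)
        · exact Or.inr (Or.inr h)
        · exact absurd (h ▸ hx) h2
      exact le_trans (Set.ncard_le_ncard hsub' (Set.toFinite _)) (DStarAux.ncard_triple_le a b u)
    have hQ3v : ∀ Q ∈ P, u ∉ Q → Q.ncard ≤ 3 := by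
      intro Q hQ h2
      obtain ⟨a, b, p, hp, hsup⟩ := hpaths Q hQ
      have hsub := DStarAux.support_sub (u := u) (v := v) hothers p hp
      rw [← hsup] at h2 ⊢
      have hsub' : {x | x ∈ p.support} ⊆ {a, b, v} := by
        intro x hx
        rcases hsub hx with h | h | h | h
        · exact Or.inl h
        · exact Or.inr (Or.inl h)
        · exact absurd (h ▸ hx) h2
        · exact Or.inr (Or.inr h)
      exact le_trans (Set.ncard_le_ncard hsub' (Set.toFinite _)) (DStarAux.ncard_triple_le a b v)
    have hQ4 : ∀ Q ∈ P, Q.ncard ≤ 4 := by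
      intro Q hQ
      obtain ⟨a, b, p, hp, hsup⟩ := hpaths Q hQ
      rw [← hsup]
      exact le_trans (Set.ncard_le_ncard (DStarAux.support_sub (u := u) (v := v) hothers p hp)
        (Set.toFinite _)) (DStarAux.ncard_quad_le a b u v)
    by_cases hQuv : Qu = Qv
    · -- one path contains both centers
      have hrest : ∀ Q ∈ P \ {Qu}, Q.ncard ≤ 1 := by
        intro Q hQ
        refine hQsmall Q hQ.1 (fun h => hQ.2 ?_) (fun h => hQ.2 ?_)
        · rw [Set.mem_singleton_iff]; exact honlyu Q hQ.1 h
        · rw [Set.mem_singleton_iff]; exact (honlyv Q hQ.1 h).trans hQuv.symm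
      have hcover : (Set.univ : Set V) ⊆ Qu ∪ ⋃₀ (P \ {Qu}) := by
        intro x _
        have hx : x ∈ ⋃₀ P := by rw [hUn]; trivial
        obtain ⟨Q, hQ, hxQ⟩ := hx
        by_cases h : Q = Qu
        · exact Or.inl (h ▸ hxQ)
        · exact Or.inr ⟨Q, ⟨hQ, h⟩, hxQ⟩
      have hb1' : (Set.univ : Set V).ncard ≤ Qu.ncard + (⋃₀ (P \ {Qu})).ncard :=
        le_trans (Set.ncard_le_ncard hcover (Set.toFinite _)) (Set.ncard_union_le _ _)
      have hb2' : (⋃₀ (P \ {Qu})).ncard ≤ (P \ {Qu}).ncard := DStarAux.sUnion_small hrest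
      have hb3' : (P \ {Qu}).ncard ≤ P.ncard := Set.ncard_le_ncard Set.diff_subset (Set.toFinite _)
      have hb4' := hQ4 Qu hQu
      omega
    · -- two different paths contain the centers
      have hvQu : v ∉ Qu := fun h => hQuv (honlyv Qu hQu h)
      have huQv : u ∉ Qv := fun h => hQuv ((honlyu Qv hQv h)).symm
      have hrest : ∀ Q ∈ P \ {Qu, Qv}, Q.ncard ≤ 1 := by
        intro Q hQ
        have h1 : Q ≠ Qu := fun h => hQ.2 (by rw [h]; exact Or.inl rfl)
        have h2 : Q ≠ Qv := fun h => hQ.2 (by rw [h]; exact Or.inr rfl)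
        exact hQsmall Q hQ.1 (fun h => h1 (honlyu Q hQ.1 h)) (fun h => h2 (honlyv Q hQ.1 h))
      have hcover : (Set.univ : Set V) ⊆ Qu ∪ (Qv ∪ ⋃₀ (P \ {Qu, Qv})) := by
        intro x _
        have hx : x ∈ ⋃₀ P := by rw [hUn]; trivial
        obtain ⟨Q, hQ, hxQ⟩ := hx
        by_cases h : Q = Qu
        · exact Or.inl (h ▸ hxQ)
        by_cases h' : Q = Qv
        · exact Or.inr (Or.inl (h' ▸ hxQ))
        · exact Or.inr (Or.inr ⟨Q, ⟨hQ, by simp [h, h']⟩, hxQ⟩)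
      have hb1' : (Set.univ : Set V).ncard ≤ Qu.ncard + (Qv.ncard + (⋃₀ (P \ {Qu, Qv})).ncard) := by
        refine le_trans (Set.ncard_le_ncard hcover (Set.toFinite _)) ?_
        refine le_trans (Set.ncard_union_le _ _) ?_
        exact Nat.add_le_add_left (Set.ncard_union_le _ _) _
      have hb2' : (⋃₀ (P \ {Qu, Qv})).ncard ≤ (P \ {Qu, Qv}).ncard := DStarAux.sUnion_small hrest
      have hPcard : P.ncard = (P \ {Qu, Qv}).ncard + 2 := by
        have hPeq : P = insert Qu (insert Qv (P \ {Qu, Qv})) := by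
          ext Q
          constructor
          · intro hQ
            by_cases h : Q = Qu
            · exact Or.inl h
            by_cases h' : Q = Qv
            · exact Or.inr (Or.inl h')
            · exact Or.inr (Or.inr ⟨hQ, by simp [h, h']⟩)
          · rintro (rfl | rfl | hQ)
            · exact hQu
            · exact hQv
            · exact hQ.1
        have hd1 : Qv ∉ P \ {Qu, Qv} := by simp
        have hd2 : Qu ∉ insert Qv (P \ {Qu, Qv}) := by simp [hQuv]
        calc P.ncard = (insert Qu (insert Qv (P \ {Qu, Qv}))).ncard := by rw [← hPeq]
          _ = (insert Qv (P \ {Qu, Qv})).ncard + 1 := Set.ncard_insert_of_notMem hd2 (Set.toFinite _)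
          _ = (P \ {Qu, Qv}).ncard + 1 + 1 := by rw [Set.ncard_insert_of_notMem hd1 (Set.toFinite _)]
          _ = (P \ {Qu, Qv}).ncard + 2 := by omega
      have hb3' := hQ3u Qu hQu hvQu
      have hb4' := hQ3v Qv hQv huQv
      omega
  have hpc : G.pathCoverNumber = r + s - 2 := by
    have hmem : (r + s - 2) ∈ {n | ∃ P : Set (Set V), G.IsPathCover P ∧ P.ncard = n} :=
      ⟨P0, hcoverP0, hP0card⟩
    have hle : sInf {n | ∃ P : Set (Set V), G.IsPathCover P ∧ P.ncard = n} ≤ r + s - 2 :=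
      Nat.sInf_le hmem
    obtain ⟨P1, hP1, hP1card⟩ :=
      Nat.sInf_mem (⟨_, hmem⟩ : {n | ∃ P : Set (Set V), G.IsPathCover P ∧ P.ncard = n}.Nonempty)
    have hge := hpc_lower P1 hP1
    rw [SimpleGraph.pathCoverNumber]
    omega
  refine ⟨hpc, ?_⟩
  -- total forcing set construction
  set S0 : Set V := insert u (insert v ((Lu \ {a1}) ∪ (Lv \ {b1}))) with hS0def
  have huS0 : u ∈ S0 := Set.mem_insert _ _
  have hvS0 : v ∈ S0 := Set.mem_insert_of_mem _ (Set.mem_insert _ _)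
  have hS0mem : ∀ y, y ≠ a1 → y ≠ b1 → y ∈ S0 := by
    intro y h1 h2
    rcases hpart y with rfl | rfl | h | h
    · exact huS0
    · exact hvS0
    · exact Set.mem_insert_of_mem _ (Set.mem_insert_of_mem _
        (Set.mem_union_left _ ⟨h, by simp [h1]⟩))
    · exact Set.mem_insert_of_mem _ (Set.mem_insert_of_mem _
        (Set.mem_union_right _ ⟨h, by simp [h2]⟩))
  have hzf : G.IsZeroForcingSet S0 := by
    have hfa : G.Forced S0 a1 := by
      refine SimpleGraph.Forced.force u a1 (SimpleGraph.Forced.init u huS0) ha1.1 ?_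
      intro x hx hxne
      refine SimpleGraph.Forced.init x (hS0mem x hxne ?_)
      rintro rfl
      exact hneuv (DStarAux.nbr_unique hb1.2 hx.symm hb1.1.symm)
    have hfb : G.Forced S0 b1 := by
      refine SimpleGraph.Forced.force v b1 (SimpleGraph.Forced.init v hvS0) hb1.1 ?_
      intro x hx hxne
      refine SimpleGraph.Forced.init x (hS0mem x ?_ hxne)
      rintro rfl
      exact hneuv (DStarAux.nbr_unique ha1.2 hx.symm ha1.1.symm).symm
    intro x
    by_cases h1 : x = a1; · exact h1 ▸ hfa
    by_cases h2 : x = b1; · exact h2 ▸ hfb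
    exact SimpleGraph.Forced.init x (hS0mem x h1 h2)
  have htf : G.IsTotalForcingSet S0 := by
    refine ⟨hzf, ?_⟩
    intro y hy
    rcases hy with rfl | rfl | h | h
    · exact ⟨v, hvS0, huv⟩
    · exact ⟨u, huS0, huv.symm⟩
    · exact ⟨u, huS0, h.1.1.symm⟩
    · exact ⟨v, hvS0, h.1.1.symm⟩
  have hS0card : S0.ncard = r + s := by
    have h1 : (Lu \ {a1}).ncard = r - 1 := by
      rw [Set.ncard_diff (by simpa using ha1) (Set.toFinite _), Set.ncard_singleton, hru]
    have h2 : (Lv \ {b1}).ncard = s - 1 := by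
      rw [Set.ncard_diff (by simpa using hb1) (Set.toFinite _), Set.ncard_singleton, hsv]
    have hd : Disjoint (Lu \ {a1}) (Lv \ {b1}) := by
      rw [Set.disjoint_left]; intro t ht ht'; exact hdisjL t ht.1 ht'.1
    have hv1 : v ∉ (Lu \ {a1}) ∪ (Lv \ {b1}) := by
      rintro (h | h); exacts [hvLu h.1, hvLv h.1]
    have hu1 : u ∉ insert v ((Lu \ {a1}) ∪ (Lv \ {b1})) := by
      rintro (h | h | h); exacts [hneuv h, huLu h.1, huLv h.1]
    rw [hS0def, Set.ncard_insert_of_notMem hu1 (Set.toFinite _),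
      Set.ncard_insert_of_notMem hv1 (Set.toFinite _),
      Set.ncard_union_eq hd (Set.toFinite _) (Set.toFinite _), h1, h2]
    omega
  -- lower bound for total forcing sets
  have htf_lower : ∀ S : Set V, G.IsTotalForcingSet S → r + s ≤ S.ncard := by
    intro S hS
    obtain ⟨hzfS, htotS⟩ := hS
    have hLu1 : (Lu \ S).ncard ≤ 1 := by
      by_contra hc
      push_neg at hc
      obtain ⟨l1, hl1, l2, hl2, hl12⟩ : ∃ a ∈ Lu \ S, ∃ b ∈ Lu \ S, a ≠ b := by
        have := Set.one_lt_ncard_iff (hs := Set.toFinite (Lu \ S)) |>.mp hc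
        tauto
      exact ((DStarAux.forced_ne_pair hl1.1.1 hl2.1.1 hl1.1.2 hl2.1.2 hl12 hl1.2 hl2.2
        l1 (hzfS l1)).1) rfl
    have hLv1 : (Lv \ S).ncard ≤ 1 := by
      by_contra hc
      push_neg at hc
      obtain ⟨l1, hl1, l2, hl2, hl12⟩ : ∃ a ∈ Lv \ S, ∃ b ∈ Lv \ S, a ≠ b := by
        have := Set.one_lt_ncard_iff (hs := Set.toFinite (Lv \ S)) |>.mp hc
        tauto
      exact ((DStarAux.forced_ne_pair hl1.1.1 hl2.1.1 hl1.1.2 hl2.1.2 hl12 hl1.2 hl2.2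
        l1 (hzfS l1)).1) rfl
    have hLuc : (Lu ∩ S).ncard + (Lu \ S).ncard = r := by
      rw [← hru]; exact Set.ncard_inter_add_ncard_diff_eq_ncard Lu S (Set.toFinite _)
    have hLvc : (Lv ∩ S).ncard + (Lv \ S).ncard = s := by
      rw [← hsv]; exact Set.ncard_inter_add_ncard_diff_eq_ncard Lv S (Set.toFinite _)
    have huS : u ∈ S := by
      obtain ⟨l, hl⟩ : (Lu ∩ S).Nonempty := Set.nonempty_of_ncard_ne_zero (by omega)
      obtain ⟨z, hzS, hadj⟩ := htotS l hl.2
      have hzu : z = u := DStarAux.nbr_unique hl.1.2 hadj hl.1.1.symm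
      exact hzu ▸ hzS
    have hvS : v ∈ S := by
      obtain ⟨l, hl⟩ : (Lv ∩ S).Nonempty := Set.nonempty_of_ncard_ne_zero (by omega)
      obtain ⟨z, hzS, hadj⟩ := htotS l hl.2
      have hzv : z = v := DStarAux.nbr_unique hl.1.2 hadj hl.1.1.symm
      exact hzv ▸ hzS
    have hsub : insert u (insert v ((Lu ∩ S) ∪ (Lv ∩ S))) ⊆ S := by
      rintro t (rfl | rfl | h | h)
      exacts [huS, hvS, h.2, h.2]
    have hle := Set.ncard_le_ncard hsub (Set.toFinite _)
    have hd : Disjoint (Lu ∩ S) (Lv ∩ S) := by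
      rw [Set.disjoint_left]; intro t ht ht'; exact hdisjL t ht.1 ht'.1
    have hv1 : v ∉ (Lu ∩ S) ∪ (Lv ∩ S) := by
      rintro (h | h); exacts [hvLu h.1, hvLv h.1]
    have hu1 : u ∉ insert v ((Lu ∩ S) ∪ (Lv ∩ S)) := by
      rintro (h | h | h); exacts [hneuv h, huLu h.1, huLv h.1]
    rw [Set.ncard_insert_of_notMem hu1 (Set.toFinite _),
      Set.ncard_insert_of_notMem hv1 (Set.toFinite _),
      Set.ncard_union_eq hd (Set.toFinite _) (Set.toFinite _)] at hle
    omega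
  have hmem : (r + s) ∈ {n | ∃ S : Set V, G.IsTotalForcingSet S ∧ S.ncard = n} :=
    ⟨S0, htf, hS0card⟩
  have hle : sInf {n | ∃ S : Set V, G.IsTotalForcingSet S ∧ S.ncard = n} ≤ r + s :=
    Nat.sInf_le hmem
  obtain ⟨S1, hS1, hS1card⟩ :=
    Nat.sInf_mem (⟨_, hmem⟩ : {n | ∃ S : Set V, G.IsTotalForcingSet S ∧ S.ncard = n}.Nonempty)
  have hge := htf_lower S1 hS1
  rw [SimpleGraph.totalForcingNumber]
  omega
end
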